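/- Let K be a field with char(K) ≠ 2 and UT2 the 2×2 upper triangular matrices over K with Jordan product u∘v = (1/2)(u·v + v·u). Then the associative grading (E0 = span{e11+e22, e12}, E1 = span{e11−e22}) and the classical grading (F0 = span{e11+e22, e11−e22}, F1 = span{e12}) are not isomorphic as Z2-graded Jordan algebras: there is no K-linear bijection φ: UT2 → UT2 satisfying φ(u∘v) = φ(u)∘φ(v) for all u, v ∈ UT2 together with φ(E0) = F0 and φ(E1) = F1. -/
import Mathlib


open Matrix

noncomputable section

/-- The 2×2 matrices over `K`. -/
abbrev Mat (K : Type*) [Field K] : Type _ := Matrix (Fin 2) (Fin 2) K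

/-- The Jordan product `u∘v = (1/2)(u·v + v·u)`. -/
def jp {K : Type*} [Field K] (u v : Mat K) : Mat K := (1/2 : K) • (u * v + v * u)

/-- The submodule of upper triangular 2×2 matrices (the underlying space of `UJ₂`). -/
def UT (K : Type*) [Field K] : Submodule K (Mat K) where
  carrier := {M | M 1 0 = 0}
  add_mem' := by intro a b ha hb; simp_all [Set.mem_setOf_eq]
  zero_mem' := by simp [Set.mem_setOf_eq]
  smul_mem' := by intro c a ha; simp_all [Set.mem_setOf_eq]

lemma jp_mem_UT {K : Type*} [Field K] {u v : Mat K} (hu : u ∈ UT K) (hv : v ∈ UT K) :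
    jp u v ∈ UT K := by
  have hu' : u 1 0 = 0 := hu
  have hv' : v 1 0 = 0 := hv
  show (jp u v) 1 0 = 0
  simp [jp, Matrix.mul_apply, Fin.sum_univ_two, hu', hv']

/-- The Jordan product on `UJ₂ = UT₂` with the Jordan structure. -/
def jpT {K : Type*} [Field K] (u v : UT K) : UT K := ⟨jp u.1 v.1, jp_mem_UT u.2 v.2⟩

def oneT (K : Type*) [Field K] : UT K := ⟨!![1, 0; 0, 1], by show (!![1,0;0,1] : Mat K) 1 0 = 0; simp⟩
def aT (K : Type*) [Field K] : UT K := ⟨!![1, 0; 0, -1], by show (!![1,0;0,-1] : Mat K) 1 0 = 0; simp⟩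
def bT (K : Type*) [Field K] : UT K := ⟨!![0, 1; 0, 0], by show (!![0,1;0,0] : Mat K) 1 0 = 0; simp⟩

/-- Even component of the associative grading: `span{e11+e22, e12}`. -/
def E0 (K : Type*) [Field K] : Submodule K (UT K) := Submodule.span K {oneT K, bT K}

/-- Odd component of the associative grading: `span{e11−e22}`. -/
def E1 (K : Type*) [Field K] : Submodule K (UT K) := Submodule.span K {aT K}

/-- Even component of the classical grading: `span{e11+e22, e11−e22}`. -/
def F0 (K : Type*) [Field K] : Submodule K (UT K) := Submodule.span K {oneT K, aT K}

/-- Odd component of the classical grading: `span{e12}`. -/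
def F1 (K : Type*) [Field K] : Submodule K (UT K) := Submodule.span K {bT K}

lemma jpT_aa (K : Type*) [Field K] (hK : ringChar K ≠ 2) :
    jpT (aT K) (aT K) = oneT K := by
  have h2 : (2 : K) ≠ 0 := Ring.two_ne_zero hK
  apply Subtype.ext
  show jp (!![1, 0; 0, -1] : Mat K) !![1, 0; 0, -1] = !![1, 0; 0, 1]
  ext i j
  fin_cases i <;> fin_cases j <;>
    simp [jp, Matrix.mul_apply, Fin.sum_univ_two, one_add_one_eq_two, inv_mul_cancel₀ h2]

lemma jpT_bsmul (K : Type*) [Field K] (c : K) :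
    jpT (c • bT K) (c • bT K) = 0 := by
  apply Subtype.ext
  show jp (c • (!![0, 1; 0, 0] : Mat K)) (c • !![0, 1; 0, 0]) = 0
  ext i j
  fin_cases i <;> fin_cases j <;>
    simp [jp, Matrix.mul_apply, Fin.sum_univ_two]

/-- the associative grading and the classical grading on `UJ₂` are not
isomorphic as `ℤ₂`-graded Jordan algebras: no `K`-linear bijection of `UJ₂` preserving
the Jordan product maps `E0` onto `F0` and `E1` onto `F1`. -/
theorem stmt_17 (K : Type*) [Field K] (hK : ringChar K ≠ 2) :
    ¬ ∃ φ : UT K →ₗ[K] UT K, Function.Bijective φ ∧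
        (∀ u v : UT K, φ (jpT u v) = jpT (φ u) (φ v)) ∧
        Submodule.map φ (E0 K) = F0 K ∧ Submodule.map φ (E1 K) = F1 K := by
  rintro ⟨φ, hbij, hmul, -, h1⟩
  have haE1 : aT K ∈ E1 K := Submodule.mem_span_singleton_self _
  have haF1 : φ (aT K) ∈ F1 K := by
    rw [← h1]; exact ⟨aT K, haE1, rfl⟩
  obtain ⟨c, hc⟩ := Submodule.mem_span_singleton.mp haF1
  have key : φ (oneT K) = 0 := by
    rw [← jpT_aa K hK, hmul, ← hc, jpT_bsmul]
  have hone : oneT K ≠ 0 := by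
    intro h
    have := congrArg (fun m : UT K => m.1 0 0) h
    simp [oneT] at this
  exact hone (hbij.injective (key.trans (map_zero φ).symm))
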